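/- arXiv:1511.00209 — 3 statements merged into one kernel-verified Lean document; each statement's English description precedes it below -/
import Mathlib

section
/- Let p and q be relatively prime positive integers and let (a,b) be the restricted Bézout coefficients of (q,p). Then the sequence S(0,q/p) ∈ {0,1}^ℤ is eventually periodic, its least period is p+q, and its anomaly size is a(S(0,q/p)) = a+b. -/
open Classical

/-- The shift map `σ` on bi-infinite sequences: `σ(x)_i = x_{i+1}`. -/
def shiftMap {A : Type*} (x : ℤ → A) : ℤ → A := fun i => x (i + 1)

/-- The iterated shift `σ^k` for `k ∈ ℤ`: `σ^k(x)_i = x_{i+k}`. -/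
def shiftZ {A : Type*} (k : ℤ) (x : ℤ → A) : ℤ → A := fun i => x (i + k)

/-- `x` is periodic with period `N > 0`, i.e. `σ^N(x) = x`. -/
def IsPeriodicWith {A : Type*} (x : ℤ → A) (N : ℕ) : Prop :=
  0 < N ∧ ∀ i : ℤ, x (i + N) = x i

/-- `x` is periodic (with some period `N > 0`). -/
def IsPeriodicSeq {A : Type*} (x : ℤ → A) : Prop := ∃ N : ℕ, IsPeriodicWith x N

/-- The sequence `p(x;i,n)` obtained from `x` by removing the block `x_{i+1} ⋯ x_{i+n}`. -/
def removeBlock {A : Type*} (x : ℤ → A) (i : ℤ) (n : ℕ) : ℤ → A :=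
  fun k => if k ≤ i then x k else x (k + n)

/-- `(i,n)` is an anomaly occurrence of `x`: `n > 0` and `p(x;i,n)` is periodic. -/
def IsAnomalyOcc {A : Type*} (x : ℤ → A) (i : ℤ) (n : ℕ) : Prop :=
  0 < n ∧ IsPeriodicSeq (removeBlock x i n)

/-- `x` is eventually periodic: non-periodic, but removing some block leaves a periodic sequence. -/
def EventuallyPeriodic {A : Type*} (x : ℤ → A) : Prop :=
  ¬ IsPeriodicSeq x ∧ ∃ (i : ℤ) (n : ℕ), IsAnomalyOcc x i n

/-- The least period of an eventually periodic sequence `x`: the least period of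
`p(x;i,n)` over anomaly occurrences `(i,n)` of `x`. -/
noncomputable def evLeastPeriod {A : Type*} (x : ℤ → A) : ℕ :=
  sInf {N : ℕ | ∃ (i : ℤ) (n : ℕ), IsAnomalyOcc x i n ∧ IsPeriodicWith (removeBlock x i n) N}

/-- The anomaly size `a(x)`: the minimum of `n` over anomaly occurrences `(i,n)` of `x`. -/
noncomputable def anomalySize {A : Type*} (x : ℤ → A) : ℕ :=
  sInf {n : ℕ | ∃ i : ℤ, IsAnomalyOcc x i n}

/-- The orbit `{σ^k(x) : k ∈ ℤ}` of a bi-infinite sequence. -/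
def seqOrbit {A : Type*} (x : ℤ → A) : Set (ℤ → A) := {y | ∃ k : ℤ, y = shiftZ k x}

/-- The subshift generated by `x`: the closure of its orbit in the product topology. -/
def subshiftGen {A : Type*} [TopologicalSpace A] (x : ℤ → A) : Set (ℤ → A) :=
  closure (seqOrbit x)

/-- Two subshifts are conjugate if there is a homeomorphism between them commuting
with the shift. -/
def Conjugate {A B : Type*} [TopologicalSpace A] [TopologicalSpace B]
    (X : Set (ℤ → A)) (Y : Set (ℤ → B)) : Prop :=
  ∃ φ : X ≃ₜ Y, ∀ (u : ℤ → A) (hu : u ∈ X) (hu' : shiftMap u ∈ X),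
    ((φ ⟨shiftMap u, hu'⟩ : Y) : ℤ → B) = shiftMap ((φ ⟨u, hu⟩ : Y) : ℤ → B)

/-- The relation generating the suspension: `(x,s) ∼ (σ^n(x), s - n)`. -/
def SuspRel {A : Type*} (X : Set (ℤ → A)) : (X × ℝ) → (X × ℝ) → Prop :=
  fun p q => ∃ n : ℤ, (q.1 : ℤ → A) = shiftZ n (p.1 : ℤ → A) ∧ q.2 = p.2 - n

/-- The suspension `ΣX` of a subshift `X`. -/
def Susp {A : Type*} [TopologicalSpace A] (X : Set (ℤ → A)) : Type _ :=
  Quot (SuspRel X)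

instance {A : Type*} [TopologicalSpace A] (X : Set (ℤ → A)) : TopologicalSpace (Susp X) :=
  instTopologicalSpaceQuot

/-- The suspension flow `φ_t [x,s] = [x, s+t]`. -/
def suspFlow {A : Type*} [TopologicalSpace A] (X : Set (ℤ → A)) (t : ℝ) :
    Susp X → Susp X :=
  Quot.lift (fun p => Quot.mk _ (p.1, p.2 + t)) (by
    rintro p r ⟨n, h1, h2⟩
    exact Quot.sound ⟨n, h1, by rw [h2]; ring⟩)

/-- Two subshifts are flow equivalent if there is a homeomorphism of their suspensions
taking flow lines to flow lines in an orientation-preserving way. -/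
def FlowEquiv {A B : Type*} [TopologicalSpace A] [TopologicalSpace B]
    (X : Set (ℤ → A)) (Y : Set (ℤ → B)) : Prop :=
  ∃ h : Susp X ≃ₜ Susp Y, ∀ u : Susp X, ∃ τ : ℝ → ℝ,
    StrictMono τ ∧ Function.Bijective τ ∧ τ 0 = 0 ∧
      ∀ t : ℝ, h (suspFlow X t u) = suspFlow Y (τ t) (h u)

/-- Cell lengths `z_n` for the type-`S` skew Sturmian sequence `S(0, q/p)`, with `β = p/q`. -/
noncomputable def cellLenS (p q : ℤ) (n : ℤ) : ℕ :=
  if n < 0 then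
    ({k : ℤ | (n : ℚ) < (k : ℚ) * ((p : ℚ) / (q : ℚ)) ∧
        (k : ℚ) * ((p : ℚ) / (q : ℚ)) ≤ (n : ℚ) + 1}).ncard
  else if n = 0 then
    ({k : ℤ | 0 < (k : ℚ) * ((p : ℚ) / (q : ℚ)) ∧
        (k : ℚ) * ((p : ℚ) / (q : ℚ)) < 1}).ncard
  else
    ({k : ℤ | (n : ℚ) ≤ (k : ℚ) * ((p : ℚ) / (q : ℚ)) ∧
        (k : ℚ) * ((p : ℚ) / (q : ℚ)) < (n : ℚ) + 1}).ncard

/-- Cell lengths `z′_n` for the type-`S′` skew Sturmian sequence `S′(0, q/p)`, with `β = p/q`. -/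
noncomputable def cellLenS' (p q : ℤ) (n : ℤ) : ℕ :=
  if n < 0 then
    ({k : ℤ | (n : ℚ) ≤ (k : ℚ) * ((p : ℚ) / (q : ℚ)) ∧
        (k : ℚ) * ((p : ℚ) / (q : ℚ)) < (n : ℚ) + 1}).ncard
  else if n = 0 then
    ({k : ℤ | 0 ≤ (k : ℚ) * ((p : ℚ) / (q : ℚ)) ∧
        (k : ℚ) * ((p : ℚ) / (q : ℚ)) ≤ 1}).ncard
  else
    ({k : ℤ | (n : ℚ) < (k : ℚ) * ((p : ℚ) / (q : ℚ)) ∧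
        (k : ℚ) * ((p : ℚ) / (q : ℚ)) ≤ (n : ℚ) + 1}).ncard

/-- The position `L_n` of the leading `1` of the cell `B_n`. -/
noncomputable def cellStart (z : ℤ → ℕ) (n : ℤ) : ℤ :=
  if 0 ≤ n then n + ∑ j ∈ Finset.Ico (0 : ℤ) n, (z j : ℤ)
  else n - ∑ j ∈ Finset.Ico n (0 : ℤ), (z j : ℤ)

/-- The `{0,1}`-sequence determined by cell lengths `z`: a `1` at each position `L_n`
and `0` elsewhere. -/
noncomputable def seqOfCells (z : ℤ → ℕ) : ℤ → Fin 2 :=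
  fun i => if ∃ n : ℤ, i = cellStart z n then 1 else 0

/-- The type-`S` skew Sturmian sequence `S(0, q/p)`. -/
noncomputable def sturmS (p q : ℤ) : ℤ → Fin 2 := seqOfCells (cellLenS p q)

/-- The type-`S′` skew Sturmian sequence `S′(0, q/p)`. -/
noncomputable def sturmS' (p q : ℤ) : ℤ → Fin 2 := seqOfCells (cellLenS' p q)


/-!
Let `g m = ⌊m (p + q) / p⌋` and let `y` be the indicator word of the range of `g`. The cell
starts of `S(0,q/p)` are `L n = g n` for `n ≤ 0` and, since `b q - a p = 1`,
`L n = g (n - b) + (a + b)` for `n > 0`. So the sequence is `y` on the left half-line and `y`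
delayed by `a + b` on the right one; removing the block of length `a + b` after position `0`
leaves `y`, of period `p + q`.

The periods of `y` are exactly the multiples of `p + q`: the Galois adjoint
`c k = ⌊((k + 1) p - 1) / (p + q)⌋` of `g` increases exactly at the letters `1` of `y`, so for a
period `d` the difference `c (k + d) - c k` is a constant `C`; computing `c (d (p + q))` in `p + q`
steps of `d` and in `d` steps of `p + q` gives `(p + q) C = d p`, hence `p + q ∣ d`.

A periodic sequence agreeing with `y` on a left ray and with `y (· + e)` on a right ray forces
`y = y (· + e)`. For `p(x;i,n)` of period `N` this gives `p + q ∣ N` and `p + q ∣ n - (a + b)`,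
which pins down the least period and the anomaly size.
-/

namespace Function.Periodic

variable {α : Type*} {f g : ℤ → α} {c : ℤ}

theorem eq_of_forall_ge (hc : 0 < c) (hf : Periodic f c) (hg : Periodic g c) {K : ℤ}
    (h : ∀ k, K ≤ k → f k = g k) : f = g := by
  funext k
  have hK : K ≤ k + |K - k| * c := by nlinarith [le_abs_self (K - k), abs_nonneg (K - k)]
  rw [← hf.int_mul |K - k| k, ← hg.int_mul |K - k| k]
  exact h _ hK

theorem eq_of_forall_le (hc : 0 < c) (hf : Periodic f c) (hg : Periodic g c) {K : ℤ}
    (h : ∀ k, k ≤ K → f k = g k) : f = g := by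
  funext k
  have hK : k - |k - K| * c ≤ K := by nlinarith [le_abs_self (k - K), abs_nonneg (k - K)]
  rw [← hf.sub_int_mul_eq |k - K|, ← hg.sub_int_mul_eq |k - K|]
  exact h _ hK

end Function.Periodic

theorem apply_mul_eq_of_periodic_diff {f : ℤ → ℤ} {d : ℤ}
    (h : Function.Periodic (fun k => f k - f (k - 1)) d) (t : ℤ) :
    f (t * d) = f 0 + t * (f d - f 0) := by
  have hconst : ∀ k, f (k + d) = f k + (f d - f 0) := by
    intro k
    induction k using Int.induction_on with
    | zero => simp
    | succ i ih =>
      have := h (i + 1)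
      simp only [add_sub_cancel_right, add_right_comm _ (1 : ℤ) d] at this
      rw [add_right_comm]
      linarith
    | pred i ih =>
      have := h (-i)
      rw [sub_add_eq_add_sub]
      linarith
  induction t using Int.induction_on with
  | zero => simp
  | succ i ih => rw [add_mul, one_mul, hconst, ih]; ring
  | pred i ih =>
    have := hconst ((-i - 1) * d)
    rw [show (-i - 1) * d + d = -i * d by ring, ih] at this
    linarith

section Anomaly

open Function

variable {α : Type*}

theorem dvd_of_periodic_of_eq_on_rays {y z : ℤ → α} {P N e K K' : ℤ} (hP : 0 < P)
    (hN : 0 < N) (hper : ∀ d, Periodic y d ↔ P ∣ d) (hz : Periodic z N)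
    (hleft : ∀ k, k ≤ K → z k = y k) (hright : ∀ k, K' ≤ k → z k = y (k + e)) :
    P ∣ N ∧ P ∣ e := by
  have hy : Periodic y (N * P) := ((hper P).2 dvd_rfl).int_mul N
  have hz' : Periodic z (N * P) := by simpa only [Int.cast_id, mul_comm] using hz.int_mul P
  have hzy : z = y := hz'.eq_of_forall_le (mul_pos hN hP) hy hleft
  have hzy' : z = fun k => y (k + e) := hz'.eq_of_forall_ge (mul_pos hN hP) (hy.add_const e) hright
  subst hzy
  exact ⟨(hper N).1 hz, (hper e).1 fun k => (congrFun hzy' k).symm⟩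

variable {x y : ℤ → α} {P s : ℕ}

theorem removeBlock_eq_of_eq_on_rays (hleft : ∀ k ≤ 0, x k = y k)
    (hright : ∀ k, 0 < k → x k = y (k - s)) : removeBlock x 0 s = y := by
  funext k
  unfold removeBlock
  split_ifs with hk
  · exact hleft k hk
  · rw [hright _ (by omega), add_sub_cancel_right]

theorem dvd_of_isPeriodicWith_removeBlock (hP : 0 < P)
    (hper : ∀ d, Periodic y d ↔ (P : ℤ) ∣ d) (hleft : ∀ k ≤ 0, x k = y k)
    (hright : ∀ k, 0 < k → x k = y (k - s)) {i : ℤ} {n N : ℕ}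
    (h : IsPeriodicWith (removeBlock x i n) N) : (P : ℤ) ∣ N ∧ (P : ℤ) ∣ n - s := by
  refine dvd_of_periodic_of_eq_on_rays (K := min i 0) (K' := max (i + 1) 1) (by omega)
    (by exact_mod_cast h.1) hper h.2 (fun k hk => ?_) (fun k hk => ?_)
  · rw [removeBlock, if_pos (by omega), hleft k (by omega)]
  · rw [removeBlock, if_neg (by omega), hright _ (by omega)]
    ring_nf

theorem not_isPeriodicSeq_of_eq_on_rays (hper : ∀ d, Periodic y d ↔ (P : ℤ) ∣ d)
    (hleft : ∀ k ≤ 0, x k = y k) (hright : ∀ k, 0 < k → x k = y (k - s)) (hs : 0 < s)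
    (hsP : s < P) : ¬ IsPeriodicSeq x := by
  rintro ⟨N, hN, hx⟩
  have hdvd := (dvd_of_periodic_of_eq_on_rays (K := 0) (K' := 1) (e := -s) (by omega)
    (by exact_mod_cast hN) hper hx hleft fun k hk => hright k (by omega)).2
  have := Int.eq_zero_of_abs_lt_dvd hdvd (by rw [abs_neg, Nat.abs_cast]; exact_mod_cast hsP)
  omega

theorem isAnomalyOcc_of_eq_on_rays (hper : ∀ d, Periodic y d ↔ (P : ℤ) ∣ d)
    (hleft : ∀ k ≤ 0, x k = y k) (hright : ∀ k, 0 < k → x k = y (k - s)) (hs : 0 < s)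
    (hsP : s < P) : IsAnomalyOcc x 0 s ∧ IsPeriodicWith (removeBlock x 0 s) P := by
  have hP : IsPeriodicWith (removeBlock x 0 s) P := by
    rw [removeBlock_eq_of_eq_on_rays hleft hright]
    exact ⟨by omega, (hper P).2 dvd_rfl⟩
  exact ⟨⟨hs, P, hP⟩, hP⟩

theorem eventuallyPeriodic_of_eq_on_rays (hper : ∀ d, Periodic y d ↔ (P : ℤ) ∣ d)
    (hleft : ∀ k ≤ 0, x k = y k) (hright : ∀ k, 0 < k → x k = y (k - s)) (hs : 0 < s)
    (hsP : s < P) : EventuallyPeriodic x :=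
  ⟨not_isPeriodicSeq_of_eq_on_rays hper hleft hright hs hsP, 0, s,
    (isAnomalyOcc_of_eq_on_rays hper hleft hright hs hsP).1⟩

theorem evLeastPeriod_eq_of_eq_on_rays (hper : ∀ d, Periodic y d ↔ (P : ℤ) ∣ d)
    (hleft : ∀ k ≤ 0, x k = y k) (hright : ∀ k, 0 < k → x k = y (k - s)) (hs : 0 < s)
    (hsP : s < P) : evLeastPeriod x = P := by
  refine IsLeast.csInf_eq ⟨⟨0, s, isAnomalyOcc_of_eq_on_rays hper hleft hright hs hsP⟩, ?_⟩
  rintro N ⟨i, n, -, hN⟩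
  have hdvd := (dvd_of_isPeriodicWith_removeBlock (by omega) hper hleft hright hN).1
  exact Nat.le_of_dvd hN.1 (by exact_mod_cast hdvd)

theorem anomalySize_eq_of_eq_on_rays (hper : ∀ d, Periodic y d ↔ (P : ℤ) ∣ d)
    (hleft : ∀ k ≤ 0, x k = y k) (hright : ∀ k, 0 < k → x k = y (k - s)) (hs : 0 < s)
    (hsP : s < P) : anomalySize x = s := by
  refine IsLeast.csInf_eq ⟨⟨0, (isAnomalyOcc_of_eq_on_rays hper hleft hright hs hsP).1⟩, ?_⟩
  rintro n ⟨i, hn, N, hN⟩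
  have hdvd := (dvd_of_isPeriodicWith_removeBlock (by omega) hper hleft hright hN).2
  by_contra! hns
  have := Int.eq_zero_of_abs_lt_dvd hdvd (by rw [abs_lt]; omega)
  omega

end Anomaly

section Beatty

open Function

variable (p q : ℤ)

def beatty (m : ℤ) : ℤ := m * (p + q) / p

def beattyCount (k : ℤ) : ℤ := ((k + 1) * p - 1) / (p + q)

noncomputable def beattyWord (k : ℤ) : Fin 2 := if k ∈ Set.range (beatty p q) then 1 else 0

variable {p q}

theorem beatty_eq (hp : 0 < p) (m : ℤ) : beatty p q m = m + m * q / p := by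
  rw [beatty, show m * (p + q) = m * q + m * p by ring, Int.add_mul_ediv_right _ _ hp.ne']
  ring

theorem beatty_zero : beatty p q 0 = 0 := by simp [beatty]

theorem beatty_neg_add {a b : ℤ} (hp : 0 < p) (hab : b * q - a * p = 1) :
    beatty p q (-b) + (a + b) = -1 := by
  have h : beatty p q (-b) = -a - b - 1 := by
    rw [beatty, Int.ediv_eq_iff_of_pos hp]
    constructor <;> linarith
  omega

theorem beatty_strictMono (hp : 0 < p) (hq : 0 ≤ q) : StrictMono (beatty p q) := by
  intro m m' h
  have : m * q / p ≤ m' * q / p := Int.ediv_le_ediv hp (by nlinarith)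
  rw [beatty_eq hp, beatty_eq hp]
  omega

theorem gc_beatty_beattyCount (hp : 0 < p) (hq : 0 ≤ q) :
    GaloisConnection (beatty p q) (beattyCount p q) := by
  intro m k
  rw [beatty, beattyCount, Int.le_ediv_iff_mul_le (by omega), ← Int.lt_add_one_iff,
    Int.ediv_lt_iff_lt_mul hp]
  omega

theorem beattyCount_add_mul (hpq : p + q ≠ 0) (k j : ℤ) :
    beattyCount p q (k + j * (p + q)) = beattyCount p q k + j * p := by
  rw [beattyCount, beattyCount, ← Int.add_mul_ediv_right _ _ hpq]
  ring_nf

theorem beattyCount_le_pred_add_one (hp : 0 < p) (hq : 0 ≤ q) (k : ℤ) :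
    beattyCount p q k ≤ beattyCount p q (k - 1) + 1 := by
  rw [beattyCount, beattyCount, ← Int.add_mul_ediv_right _ _ (by omega)]
  exact Int.ediv_le_ediv (by omega) (by nlinarith)

theorem mem_range_beatty_iff (hp : 0 < p) (hq : 0 ≤ q) (k : ℤ) :
    k ∈ Set.range (beatty p q) ↔ beattyCount p q (k - 1) < beattyCount p q k := by
  have gc := gc_beatty_beattyCount hp hq
  constructor
  · rintro ⟨m, rfl⟩
    have h1 : m ≤ beattyCount p q (beatty p q m) := gc.le_u_l m
    have h2 : ¬ m ≤ beattyCount p q (beatty p q m - 1) := by rw [← gc.le_iff_le]; omega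
    omega
  · intro h
    have h1 : beatty p q (beattyCount p q (k - 1) + 1) ≤ k := gc.l_le (by omega)
    have h2 : ¬ beatty p q (beattyCount p q (k - 1) + 1) ≤ k - 1 := by rw [gc.le_iff_le]; omega
    exact ⟨beattyCount p q (k - 1) + 1, by omega⟩

theorem beattyCount_sub_pred (hp : 0 < p) (hq : 0 ≤ q) (k : ℤ) :
    beattyCount p q k - beattyCount p q (k - 1) = (beattyWord p q k).val := by
  have hmono : beattyCount p q (k - 1) ≤ beattyCount p q k :=
    (gc_beatty_beattyCount hp hq).monotone_u (by omega)
  have hstep := beattyCount_le_pred_add_one hp hq k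
  unfold beattyWord
  split_ifs with hk <;> rw [mem_range_beatty_iff hp hq] at hk <;> simp <;> omega

theorem beattyWord_periodic (hp : 0 < p) (hq : 0 ≤ q) : Periodic (beattyWord p q) (p + q) := by
  intro k
  have hpq : p + q ≠ 0 := by omega
  have h1 := beattyCount_add_mul hpq k 1
  have h2 := beattyCount_add_mul hpq (k - 1) 1
  rw [one_mul, one_mul] at h1 h2
  rw [beattyWord, beattyWord, mem_range_beatty_iff hp hq, mem_range_beatty_iff hp hq,
    show k + (p + q) - 1 = k - 1 + (p + q) by ring, h1, h2, add_lt_add_iff_right]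

theorem dvd_of_beattyWord_periodic (hp : 0 < p) (hq : 0 ≤ q) (hcop : IsCoprime p q) {d : ℤ}
    (h : Periodic (beattyWord p q) d) : p + q ∣ d := by
  have hdiff : Periodic (fun k => beattyCount p q k - beattyCount p q (k - 1)) d := by
    intro k
    simp only [beattyCount_sub_pred hp hq, h k]
  have hcount := beattyCount_add_mul (p := p) (q := q) (by omega) 0 d
  rw [zero_add, mul_comm, apply_mul_eq_of_periodic_diff hdiff] at hcount
  have hcop' : IsCoprime (p + q) p := by simpa [add_comm] using hcop.symm.add_mul_left_left 1
  exact hcop'.dvd_of_dvd_mul_right ⟨beattyCount p q d - beattyCount p q 0, by linarith⟩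

theorem periodic_beattyWord_iff (hp : 0 < p) (hq : 0 ≤ q) (hcop : IsCoprime p q) (d : ℤ) :
    Periodic (beattyWord p q) d ↔ p + q ∣ d := by
  refine ⟨dvd_of_beattyWord_periodic hp hq hcop, ?_⟩
  rintro ⟨j, rfl⟩
  simpa only [Int.cast_id, mul_comm] using (beattyWord_periodic hp hq).int_mul j

end Beatty

section Cells

variable (z : ℤ → ℕ)

theorem cellStart_of_nonpos {n : ℤ} (hn : n ≤ 0) :
    cellStart z n = n - ∑ j ∈ Finset.Ico n 0, (z j : ℤ) := by
  rcases hn.lt_or_eq with hn | rfl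
  · rw [cellStart, if_neg hn.not_ge]
  · simp [cellStart]

theorem cellStart_succ (n : ℤ) : cellStart z (n + 1) = cellStart z n + z n + 1 := by
  rcases le_or_gt 0 n with hn | hn
  · rw [cellStart, cellStart, if_pos (by omega), if_pos hn,
      ← Finset.insert_Ico_right_eq_Ico_add_one hn, Finset.sum_insert Finset.right_notMem_Ico]
    ring
  · rw [cellStart_of_nonpos z hn.le, cellStart_of_nonpos z (by omega),
      ← Finset.insert_Ico_add_one_left_eq_Ico hn, Finset.sum_insert (by simp)]
    ring

theorem cellStart_eq_of_succ (f : ℤ → ℤ) (h0 : f 0 = 0)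
    (hsucc : ∀ n, f (n + 1) = f n + z n + 1) (n : ℤ) : cellStart z n = f n := by
  induction n using Int.induction_on with
  | zero => simp [cellStart, h0]
  | succ i ih => rw [cellStart_succ, hsucc, ih]
  | pred i ih =>
    have h1 := cellStart_succ z (-i - 1)
    have h2 := hsucc (-i - 1)
    rw [sub_add_cancel] at h1 h2
    omega

end Cells

section SkewSturmian

variable {p q a b : ℤ}

theorem intCast_lt_mul_div_iff (hp : 0 < p) (hq : 0 < q) (c k : ℤ) :
    (c : ℚ) < k * (p / q) ↔ c * q / p < k := by
  rw [← mul_div_assoc, lt_div_iff₀ (by exact_mod_cast hq), Int.ediv_lt_iff_lt_mul hp]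
  exact_mod_cast Iff.rfl

theorem intCast_le_mul_div_iff (hp : 0 < p) (hq : 0 < q) (c k : ℤ) :
    (c : ℚ) ≤ k * (p / q) ↔ (c * q - 1) / p < k := by
  rw [← mul_div_assoc, le_div_iff₀ (by exact_mod_cast hq), Int.ediv_lt_iff_lt_mul hp]
  norm_cast
  omega

theorem mul_div_lt_intCast_iff (hp : 0 < p) (hq : 0 < q) (c k : ℤ) :
    k * (p / q) < (c : ℚ) ↔ k ≤ (c * q - 1) / p := by
  rw [← mul_div_assoc, div_lt_iff₀ (by exact_mod_cast hq), Int.le_ediv_iff_mul_le hp]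
  norm_cast
  omega

theorem mul_div_le_intCast_iff (hp : 0 < p) (hq : 0 < q) (c k : ℤ) :
    k * (p / q) ≤ (c : ℚ) ↔ k ≤ c * q / p := by
  rw [← mul_div_assoc, div_le_iff₀ (by exact_mod_cast hq), Int.le_ediv_iff_mul_le hp]
  exact_mod_cast Iff.rfl

theorem ncard_setOf_lt_and_le (A B : ℤ) :
    {k : ℤ | A < k ∧ k ≤ B}.ncard = (B - A).toNat := by
  rw [← Int.card_Ioc, ← Set.ncard_coe_finset, Finset.coe_Ioc]
  rfl

variable (p q) in
def sturmOffset (n : ℤ) : ℤ := if n ≤ 0 then n * q / p else (n * q - 1) / p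

theorem sturmOffset_le_succ (hp : 0 < p) (hq : 0 < q) (n : ℤ) :
    sturmOffset p q n ≤ sturmOffset p q (n + 1) := by
  unfold sturmOffset
  split_ifs <;> apply Int.ediv_le_ediv hp <;> nlinarith

theorem cellLenS_eq (hp : 0 < p) (hq : 0 < q) (n : ℤ) :
    (cellLenS p q n : ℤ) = sturmOffset p q (n + 1) - sturmOffset p q n := by
  rw [← Int.toNat_of_nonneg (sub_nonneg.2 (sturmOffset_le_succ hp hq n))]
  congr 1
  have h1 : (n : ℚ) + 1 = ((n + 1 : ℤ) : ℚ) := by push_cast; ring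
  unfold cellLenS sturmOffset
  rcases lt_trichotomy n 0 with hn | rfl | hn
  · simp only [if_pos hn, h1, intCast_lt_mul_div_iff hp hq, mul_div_le_intCast_iff hp hq,
      ncard_setOf_lt_and_le, if_pos hn.le, if_pos (show n + 1 ≤ 0 by omega)]
  · rw [if_neg (lt_irrefl 0), if_pos rfl, show (0 : ℚ) = ((0 : ℤ) : ℚ) by simp,
      show (1 : ℚ) = ((1 : ℤ) : ℚ) by simp]
    simp only [intCast_lt_mul_div_iff hp hq, mul_div_lt_intCast_iff hp hq, ncard_setOf_lt_and_le]
    simp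
  · simp only [if_neg hn.not_gt, if_neg hn.ne', h1, intCast_le_mul_div_iff hp hq,
      mul_div_lt_intCast_iff hp hq, ncard_setOf_lt_and_le, if_neg hn.not_ge,
      if_neg (show ¬ n + 1 ≤ 0 by omega)]

theorem cellStart_cellLenS (hp : 0 < p) (hq : 0 < q) (n : ℤ) :
    cellStart (cellLenS p q) n = n + sturmOffset p q n := by
  refine cellStart_eq_of_succ _ (fun n => n + sturmOffset p q n) (by simp [sturmOffset])
    (fun n => ?_) n
  rw [cellLenS_eq hp hq]
  ring

theorem cellStart_cellLenS_of_nonpos (hp : 0 < p) (hq : 0 < q) {n : ℤ} (hn : n ≤ 0) :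
    cellStart (cellLenS p q) n = beatty p q n := by
  rw [cellStart_cellLenS hp hq, beatty_eq hp, sturmOffset, if_pos hn]

theorem cellStart_cellLenS_of_pos (hp : 0 < p) (hq : 0 < q) (hab : b * q - a * p = 1) {n : ℤ}
    (hn : 0 < n) : cellStart (cellLenS p q) n = beatty p q (n - b) + (a + b) := by
  rw [cellStart_cellLenS hp hq, beatty_eq hp, sturmOffset, if_neg hn.not_ge,
    show (n - b) * q = n * q - 1 + -a * p by linear_combination -hab,
    Int.add_mul_ediv_right _ _ hp.ne']
  ring

theorem one_le_cellStart_cellLenS (hp : 0 < p) (hq : 0 < q) {n : ℤ} (hn : 0 < n) :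
    1 ≤ cellStart (cellLenS p q) n := by
  have : 0 ≤ (n * q - 1) / p := Int.ediv_nonneg (by nlinarith) hp.le
  rw [cellStart_cellLenS hp hq, sturmOffset, if_neg hn.not_ge]
  omega

theorem sturmS_of_nonpos (hp : 0 < p) (hq : 0 < q) {k : ℤ} (hk : k ≤ 0) :
    sturmS p q k = beattyWord p q k := by
  refine if_congr ⟨?_, ?_⟩ rfl rfl
  · rintro ⟨n, rfl⟩
    rcases le_or_gt n 0 with hn | hn
    · exact ⟨n, (cellStart_cellLenS_of_nonpos hp hq hn).symm⟩
    · linarith [one_le_cellStart_cellLenS hp hq hn]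
  · rintro ⟨m, rfl⟩
    refine ⟨m, (cellStart_cellLenS_of_nonpos hp hq ?_).symm⟩
    by_contra! hm
    have := beatty_strictMono hp hq.le hm
    rw [beatty_zero] at this
    omega

theorem sturmS_of_pos (hp : 0 < p) (hq : 0 < q) (hab : b * q - a * p = 1) {k : ℤ} (hk : 0 < k) :
    sturmS p q k = beattyWord p q (k - (a + b)) := by
  refine if_congr ⟨?_, ?_⟩ rfl rfl
  · rintro ⟨n, rfl⟩
    rcases le_or_gt n 0 with hn | hn
    · have := (beatty_strictMono hp hq.le).monotone hn
      rw [cellStart_cellLenS_of_nonpos hp hq hn, beatty_zero] at *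
      omega
    · exact ⟨n - b, by rw [cellStart_cellLenS_of_pos hp hq hab hn]; ring⟩
  · rintro ⟨m, hm⟩
    have hmb : 0 < m + b := by
      by_contra! h
      have := (beatty_strictMono hp hq.le).monotone (show m ≤ -b by omega)
      have := beatty_neg_add (q := q) hp hab
      omega
    refine ⟨m + b, ?_⟩
    rw [cellStart_cellLenS_of_pos hp hq hab hmb, add_sub_cancel_right, hm]
    ring

end SkewSturmian

/-- `S(0,q/p)` is eventually periodic with least period `p+q` and anomaly
size `a+b`, where `(a,b)` are the restricted Bézout coefficients of `(q,p)`. -/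
theorem stmt_12 (p q : ℤ) (hp : 0 < p) (hq : 0 < q) (hpq : IsCoprime p q)
    (a b : ℤ) (ha : 0 ≤ a) (ha' : a < q) (hb : 0 < b) (hb' : b ≤ p)
    (hab : b * q - a * p = 1) :
    EventuallyPeriodic (sturmS p q) ∧ (evLeastPeriod (sturmS p q) : ℤ) = p + q ∧
      (anomalySize (sturmS p q) : ℤ) = a + b := by
  obtain ⟨P, hP⟩ : ∃ P : ℕ, (P : ℤ) = p + q := ⟨(p + q).toNat, by omega⟩
  obtain ⟨s, hs⟩ : ∃ s : ℕ, (s : ℤ) = a + b := ⟨(a + b).toNat, by omega⟩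
  have hper : ∀ d, Function.Periodic (beattyWord p q) d ↔ (P : ℤ) ∣ d := by
    rw [hP]
    exact periodic_beattyWord_iff hp hq.le hpq
  have hleft : ∀ k ≤ 0, sturmS p q k = beattyWord p q k := fun k => sturmS_of_nonpos hp hq
  have hright : ∀ k, 0 < k → sturmS p q k = beattyWord p q (k - s) := by
    rw [hs]
    exact fun k => sturmS_of_pos hp hq hab
  have hs0 : 0 < s := by omega
  have hsP : s < P := by omega
  exact ⟨eventuallyPeriodic_of_eq_on_rays hper hleft hright hs0 hsP,
    by rw [evLeastPeriod_eq_of_eq_on_rays hper hleft hright hs0 hsP, hP],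
    by rw [anomalySize_eq_of_eq_on_rays hper hleft hright hs0 hsP, hs]⟩
end

section
/- Let p and q be relatively prime positive integers and let (a,b) be the restricted Bézout coefficients of (q,p). Then the sequence S′(0,q/p) ∈ {0,1}^ℤ is eventually periodic, its least period is p+q, and its anomaly size is a(S′(0,q/p)) = (p+q) − (a+b). -/
open Classical

/-!
The ones of `S′(0,q/p)` sit at `n + ⌈nq/p⌉` for `n ≤ 0` and at `n + ⌊nq/p⌋ + 1` for `n ≥ 1`.
The first formula, taken for all `n`, describes a `(p+q)`-periodic sequence `y = leftSeq p q`;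
since `(n + b) q = n q + 1 + a p`, the second one describes `y` shifted by `a + b`. So `S′`
agrees with `y` left of `p + q`, with `k ↦ y (k + a + b)` from `2` on, and differs from `y` at
`p + q`. A block removal leaving a periodic sequence must leave `y` itself, and when the block has
length `n` this makes `n + a + b` a period of `y`. A period `r` of `y` shifts the indices of its
ones by a constant `δ`, whence `p r = δ (p + q)` and `p + q ∣ r`. Removing the block of length
`p + q - (a + b)` after position `0` does leave `y`.
-/

open Function

section Periodic

variable {α : Type*} {f g : ℤ → α} {c K : ℤ}

lemma Function.Periodic.eq_of_forall_ge_s13 (hf : Periodic f c) (hg : Periodic g c) (hc : 0 < c)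
    (h : ∀ k ≥ K, f k = g k) : f = g := by
  funext k
  have hk : k + (K - k).toNat * c ≥ K := by
    nlinarith [Int.self_le_toNat (K - k)]
  rw [← hf.nat_mul (K - k).toNat k, ← hg.nat_mul (K - k).toNat k, h _ hk]

lemma Function.Periodic.eq_of_forall_le_s13 {d : ℤ} (hf : Periodic f c) (hg : Periodic g d)
    (hc : 0 < c) (hd : 0 < d) (h : ∀ k ≤ K, f k = g k) : f = g := by
  have hf' : Periodic f (c * d) := by simpa [mul_comm] using hf.int_mul d
  have hg' : Periodic g (c * d) := by simpa using hg.int_mul c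
  funext k
  have hk : k - (k - K).toNat * (c * d) ≤ K := by
    nlinarith [Int.self_le_toNat (k - K), mul_pos hc hd]
  rw [← hf'.sub_nat_mul_eq (k - K).toNat, ← hg'.sub_nat_mul_eq (k - K).toNat, h _ hk]

lemma Function.Periodic.eq_of_monotone [PartialOrder α] (hf : Periodic f c) (hc : 0 < c)
    (hmono : Monotone f) (m n : ℤ) : f m = f n := by
  have key : ∀ m n, f m ≤ f n := fun m n => by
    rw [← hf.nat_mul (m - n).toNat n]
    exact hmono (by nlinarith [Int.self_le_toNat (m - n)])
  exact le_antisymm (key m n) (key n m)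

end Periodic

lemma Int.map_add_int_mul {f : ℤ → ℤ} {c d : ℤ} (h : ∀ m, f (m + c) = f m + d) (k m : ℤ) :
    f (m + k * c) = f m + k * d := by
  induction k using Int.induction_on with
  | zero => simp
  | succ k ih => rw [show m + (k + 1) * c = m + k * c + c by ring, h, ih]; ring
  | pred k ih =>
    have := h (m + (-k - 1) * c)
    rw [show m + (-k - 1) * c + c = m + -k * c by ring, ih] at this
    linarith

lemma Int.sum_Ico_sub {M : Type*} [AddCommGroup M] (f : ℤ → M) {a b : ℤ} (h : a ≤ b) :
    ∑ j ∈ Finset.Ico a b, (f (j + 1) - f j) = f b - f a := by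
  induction b, h using Int.leInduction with
  | base => simp
  | succ n hn ih =>
    rw [Finset.Ico_add_one_right_eq_Icc, ← Finset.Ico_insert_right hn,
      Finset.sum_insert Finset.right_notMem_Ico, ih]
    abel

section FloorRing

variable {K : Type*} [Field K] [LinearOrder K] [IsStrictOrderedRing K] [FloorRing K]
  {β : K} (x y : K)

lemma Int.setOf_mul_mem_Ico (hβ : 0 < β) :
    {k : ℤ | x ≤ k * β ∧ k * β < y} = Set.Ico ⌈x / β⌉ ⌈y / β⌉ := by
  ext k
  simp only [Set.mem_ofPred_eq, Set.mem_Ico, Int.ceil_le, Int.lt_ceil, div_le_iff₀ hβ,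
    lt_div_iff₀ hβ]

lemma Int.setOf_mul_mem_Ioc (hβ : 0 < β) :
    {k : ℤ | x < k * β ∧ k * β ≤ y} = Set.Ioc ⌊x / β⌋ ⌊y / β⌋ := by
  ext k
  simp only [Set.mem_ofPred_eq, Set.mem_Ioc, Int.floor_lt, Int.le_floor, div_lt_iff₀ hβ,
    le_div_iff₀ hβ]

lemma Int.setOf_mul_mem_Icc (hβ : 0 < β) :
    {k : ℤ | x ≤ k * β ∧ k * β ≤ y} = Set.Icc ⌈x / β⌉ ⌊y / β⌋ := by
  ext k
  simp only [Set.mem_ofPred_eq, Set.mem_Icc, Int.ceil_le, Int.le_floor, div_le_iff₀ hβ,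
    le_div_iff₀ hβ]

lemma Int.ceil_intCast_add_one_div (N : ℤ) {p : ℤ} (hp : 0 < p) :
    ⌈((N : K) + 1) / p⌉ = ⌊(N : K) / p⌋ + 1 := by
  have hp' : (0 : K) < p := by exact_mod_cast hp
  have hlt : (N : K) < (⌊(N : K) / p⌋ + 1 : ℤ) * p := by
    push_cast
    exact (div_lt_iff₀ hp').mp (Int.lt_floor_add_one _)
  have hle : N + 1 ≤ (⌊(N : K) / p⌋ + 1) * p := by exact_mod_cast hlt
  rw [Int.ceil_eq_iff, Int.cast_add, Int.cast_one, add_sub_cancel_right, div_le_iff₀ hp']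
  constructor
  · exact (Int.floor_le _).trans_lt (by gcongr; linarith)
  · exact_mod_cast hle

end FloorRing

lemma Int.ncard_Ico (a b : ℤ) : (Set.Ico a b).ncard = (b - a).toNat := by
  rw [← Finset.coe_Ico, Set.ncard_coe_finset, Int.card_Ico]

lemma Int.ncard_Ioc (a b : ℤ) : (Set.Ioc a b).ncard = (b - a).toNat := by
  rw [← Finset.coe_Ioc, Set.ncard_coe_finset, Int.card_Ioc]

lemma Int.ncard_Icc (a b : ℤ) : (Set.Icc a b).ncard = (b + 1 - a).toNat := by
  rw [← Finset.coe_Icc, Set.ncard_coe_finset, Int.card_Icc]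

noncomputable def rangeIndicator (f : ℤ → ℤ) : ℤ → Fin 2 := fun i => if ∃ n, i = f n then 1 else 0

section RangeIndicator

variable {f g : ℤ → ℤ}

lemma rangeIndicator_eq_one_iff {i : ℤ} : rangeIndicator f i = 1 ↔ ∃ n, i = f n := by
  unfold rangeIndicator
  split_ifs with h <;> simp [h]

lemma rangeIndicator_add {c d : ℤ} (h : ∀ n, f (n + c) = g n + d) (i : ℤ) :
    rangeIndicator f (i + d) = rangeIndicator g i := by
  refine if_congr ⟨fun ⟨n, hn⟩ => ⟨n - c, ?_⟩, fun ⟨n, hn⟩ => ⟨n + c, ?_⟩⟩ rfl rfl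
  · have := h (n - c)
    rw [sub_add_cancel] at this
    omega
  · rw [h, hn]

lemma rangeIndicator_eq_of_lt (hf : Monotone f) (hg : Monotone g) {M K i : ℤ}
    (hfg : ∀ m < M, f m = g m) (hfM : K ≤ f M) (hgM : K ≤ g M) (hi : i < K) :
    rangeIndicator f i = rangeIndicator g i := by
  refine if_congr ⟨fun ⟨n, hn⟩ => ⟨n, ?_⟩, fun ⟨n, hn⟩ => ⟨n, ?_⟩⟩ rfl rfl
  · have hnM : n < M := by by_contra! h; have := hf h; omega
    rw [hn, hfg n hnM]
  · have hnM : n < M := by by_contra! h; have := hg h; omega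
    rw [hn, hfg n hnM]

lemma rangeIndicator_eq_of_gt (hf : Monotone f) (hg : Monotone g) {M K i : ℤ}
    (hfg : ∀ m > M, f m = g m) (hfM : f M < K) (hgM : g M < K) (hi : K ≤ i) :
    rangeIndicator f i = rangeIndicator g i := by
  refine if_congr ⟨fun ⟨n, hn⟩ => ⟨n, ?_⟩, fun ⟨n, hn⟩ => ⟨n, ?_⟩⟩ rfl rfl
  · have hnM : M < n := by by_contra! h; have := hf h; omega
    rw [hn, hfg n hnM]
  · have hnM : M < n := by by_contra! h; have := hg h; omega
    rw [hn, hfg n hnM]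

lemma rangeIndicator_eq_zero (hf : StrictMono f) {n i : ℤ} (h₁ : f n < i) (h₂ : i < f (n + 1)) :
    rangeIndicator f i = 0 := by
  refine if_neg fun ⟨m, hm⟩ => ?_
  subst hm
  have := hf.lt_iff_lt.mp h₁
  have := hf.lt_iff_lt.mp h₂
  omega

/-- The index shift `m ↦ f⁻¹ (f m + r) - m` is monotone and `c`-periodic, hence constant. -/
lemma exists_map_add_eq_of_periodic (hf : StrictMono f) {c d r : ℤ} (hc : 0 < c)
    (hfc : ∀ m, f (m + c) = f m + d) (hr : Periodic (rangeIndicator f) r) :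
    ∃ δ, ∀ m, f (m + δ) = f m + r := by
  have hone : ∀ m, ∃ m', f m' = f m + r := fun m => by
    obtain ⟨m', hm'⟩ := rangeIndicator_eq_one_iff.mp
      ((hr (f m)).trans (rangeIndicator_eq_one_iff.mpr ⟨m, rfl⟩))
    exact ⟨m', hm'.symm⟩
  choose g hg using hone
  have hg_mono : StrictMono g := fun m m' h => hf.lt_iff_lt.mp (by rw [hg, hg]; linarith [hf h])
  have hg_per : Periodic (fun m => g m - m) c := fun m => by
    have : g (m + c) = g m + c := hf.injective (by rw [hg, hfc, hfc, hg]; ring)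
    simp only [this]
    ring
  have hg_mono' : Monotone (fun m => g m - m) :=
    monotone_int_of_le_succ fun m => by have := hg_mono (lt_add_one m); omega
  refine ⟨g 0, fun m => ?_⟩
  have hgm : g m = m + g 0 := by
    have := hg_per.eq_of_monotone hc hg_mono' m 0
    simp only [sub_zero] at this
    omega
  rw [← hgm, hg]

lemma exists_mul_eq_mul_of_periodic (hf : StrictMono f) {c d r : ℤ} (hc : 0 < c)
    (hfc : ∀ m, f (m + c) = f m + d) (hr : Periodic (rangeIndicator f) r) :
    ∃ δ, c * r = δ * d := by
  obtain ⟨δ, hδ⟩ := exists_map_add_eq_of_periodic hf hc hfc hr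
  refine ⟨δ, ?_⟩
  have h₁ := Int.map_add_int_mul hδ c 0
  have h₂ := Int.map_add_int_mul hfc δ 0
  rw [mul_comm c δ] at h₁
  linarith

end RangeIndicator

namespace SkewSturmian

section Positions

variable {K : Type*} [Field K] [LinearOrder K] [IsStrictOrderedRing K] [FloorRing K] {β : K}

def leftPos (β : K) (m : ℤ) : ℤ := m + ⌈m / β⌉

def rightPos (β : K) (m : ℤ) : ℤ := m + ⌊m / β⌋ + 1

def onePos (β : K) (m : ℤ) : ℤ := if m ≤ 0 then leftPos β m else rightPos β m

@[simp] lemma leftPos_zero : leftPos β 0 = 0 := by simp [leftPos]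

lemma leftPos_strictMono (hβ : 0 < β) : StrictMono (leftPos β) :=
  strictMono_int_of_lt_succ fun m => by
    have : ⌈(m : K) / β⌉ ≤ ⌈((m + 1 : ℤ) : K) / β⌉ := Int.ceil_mono (by gcongr; simp)
    unfold leftPos
    omega

lemma rightPos_strictMono (hβ : 0 < β) : StrictMono (rightPos β) :=
  strictMono_int_of_lt_succ fun m => by
    have : ⌊(m : K) / β⌋ ≤ ⌊((m + 1 : ℤ) : K) / β⌋ := Int.floor_mono (by gcongr; simp)
    unfold rightPos
    omega

lemma onePos_strictMono (hβ : 0 < β) : StrictMono (onePos β) :=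
  strictMono_int_of_lt_succ fun m => by
    rcases lt_trichotomy m 0 with hm | rfl | hm
    · rw [onePos, onePos, if_pos hm.le, if_pos (by omega)]
      exact leftPos_strictMono hβ (lt_add_one m)
    · have : 0 ≤ ⌊(1 : K) / β⌋ := Int.floor_nonneg.mpr (by positivity)
      rw [zero_add, onePos, if_pos le_rfl, leftPos_zero, onePos, if_neg (by omega), rightPos,
        Int.cast_one]
      omega
    · rw [onePos, onePos, if_neg (by omega), if_neg (by omega)]
      exact rightPos_strictMono hβ (lt_add_one m)

end Positions

variable {p q a b : ℤ}

lemma cellLenS'_eq (hp : 0 < p) (hq : 0 < q) (n : ℤ) :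
    (cellLenS' p q n : ℤ) =
      (onePos (p / q : ℚ) (n + 1) - (n + 1)) - (onePos (p / q : ℚ) n - n) := by
  have hβ : (0 : ℚ) < p / q := by positivity
  rcases lt_trichotomy n 0 with hn | rfl | hn
  · have : ⌈(n : ℚ) / (p / q)⌉ ≤ ⌈((n : ℚ) + 1) / (p / q)⌉ := Int.ceil_mono (by gcongr; linarith)
    rw [cellLenS', if_pos hn, Int.setOf_mul_mem_Ico _ _ hβ, Int.ncard_Ico,
      Int.toNat_of_nonneg (by omega), onePos, onePos, if_pos (by omega), if_pos hn.le]
    simp only [leftPos, Int.cast_add, Int.cast_one]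
    ring
  · have : 0 ≤ ⌊(1 : ℚ) / (p / q)⌋ := Int.floor_nonneg.mpr (by positivity)
    rw [cellLenS', if_neg (lt_irrefl 0), if_pos rfl, Int.setOf_mul_mem_Icc _ _ hβ, Int.ncard_Icc,
      zero_div, Int.ceil_zero, Int.toNat_of_nonneg (by omega)]
    rw [zero_add, onePos, if_neg (by omega), onePos, if_pos le_rfl, leftPos_zero, rightPos,
      Int.cast_one]
    ring
  · have : ⌊(n : ℚ) / (p / q)⌋ ≤ ⌊((n : ℚ) + 1) / (p / q)⌋ := Int.floor_mono (by gcongr; linarith)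
    rw [cellLenS', if_neg (by omega), if_neg hn.ne', Int.setOf_mul_mem_Ioc _ _ hβ, Int.ncard_Ioc,
      Int.toNat_of_nonneg (by omega), onePos, onePos, if_neg (by omega), if_neg (by omega)]
    simp only [rightPos, Int.cast_add, Int.cast_one]
    ring

lemma cellStart_cellLenS' (hp : 0 < p) (hq : 0 < q) (n : ℤ) :
    cellStart (cellLenS' p q) n = onePos (p / q : ℚ) n := by
  have h₀ : onePos (p / q : ℚ) 0 = 0 := by simp [onePos]
  simp only [cellStart, cellLenS'_eq hp hq]
  split_ifs with hn
  · rw [Int.sum_Ico_sub (fun j => onePos (p / q : ℚ) j - j) hn, h₀]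
    ring
  · rw [Int.sum_Ico_sub (fun j => onePos (p / q : ℚ) j - j) (by omega), h₀]
    ring

lemma sturmS'_eq (hp : 0 < p) (hq : 0 < q) : sturmS' p q = rangeIndicator (onePos (p / q : ℚ)) :=
  funext fun i => by simp only [sturmS', seqOfCells, rangeIndicator, cellStart_cellLenS' hp hq]

lemma leftPos_add_self (hp : 0 < p) (hq : 0 < q) (m : ℤ) :
    leftPos (p / q : ℚ) (m + p) = leftPos (p / q : ℚ) m + (p + q) := by
  have : ((m + p : ℤ) : ℚ) / (p / q) = m / (p / q) + (q : ℤ) := by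
    push_cast
    field_simp
  rw [leftPos, leftPos, this, Int.ceil_add_intCast]
  ring

lemma leftPos_self (hp : 0 < p) (hq : 0 < q) : leftPos (p / q : ℚ) p = p + q := by
  simpa using leftPos_add_self hp hq 0

lemma rightPos_eq_leftPos (hp : 0 < p) (hq : 0 < q) (hpq : IsCoprime p q) {m : ℤ}
    (hm : ¬ p ∣ m) : rightPos (p / q : ℚ) m = leftPos (p / q : ℚ) m := by
  have hnotInt : (m : ℚ) / (p / q) ∉ Set.range Int.cast := by
    rintro ⟨z, hz⟩
    have : (m * q : ℤ) = p * z := by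
      have : (m * q : ℚ) = p * z := by rw [hz]; field_simp
      exact_mod_cast this
    exact hm (hpq.dvd_of_dvd_mul_right ⟨z, this⟩)
  rw [rightPos, leftPos, (Int.ceil_eq_floor_add_one_iff_notMem _).mpr hnotInt]
  ring

/-- `(m + b) q = m q + 1 + a p` and `⌈(N + 1) / p⌉ = ⌊N / p⌋ + 1`. -/
lemma leftPos_add_eq_rightPos (hp : 0 < p) (hq : 0 < q) (hab : b * q - a * p = 1) (m : ℤ) :
    leftPos (p / q : ℚ) (m + b) = rightPos (p / q : ℚ) m + (a + b) := by
  have hbq : (b * q : ℚ) = 1 + a * p := by exact_mod_cast (by linarith : b * q = 1 + a * p)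
  have h₁ : ((m + b : ℤ) : ℚ) / (p / q) = (((m * q : ℤ) : ℚ) + 1) / p + (a : ℤ) := by
    push_cast
    field_simp
    linear_combination hbq
  have h₂ : (m : ℚ) / (p / q) = ((m * q : ℤ) : ℚ) / p := by
    push_cast
    field_simp
  rw [leftPos, rightPos, h₁, Int.ceil_add_intCast, Int.ceil_intCast_add_one_div _ hp, h₂]
  ring

lemma onePos_eq_leftPos_of_lt (hp : 0 < p) (hq : 0 < q) (hpq : IsCoprime p q) {m : ℤ}
    (hm : m < p) : onePos (p / q : ℚ) m = leftPos (p / q : ℚ) m := by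
  unfold onePos
  split_ifs with h
  · rfl
  · exact rightPos_eq_leftPos hp hq hpq fun hd => by have := Int.le_of_dvd (by omega) hd; omega

lemma onePos_self (hp : 0 < p) (hq : 0 < q) : onePos (p / q : ℚ) p = p + q + 1 := by
  have : (p : ℚ) / (p / q) = (q : ℤ) := by field_simp
  rw [onePos, if_neg (by omega), rightPos, this, Int.floor_intCast]

noncomputable def leftSeq (p q : ℤ) : ℤ → Fin 2 := rangeIndicator (leftPos (p / q : ℚ))

lemma leftSeq_periodic (hp : 0 < p) (hq : 0 < q) : Periodic (leftSeq p q) (p + q) :=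
  rangeIndicator_add (leftPos_add_self hp hq)

lemma leftSeq_add (hp : 0 < p) (hq : 0 < q) (hab : b * q - a * p = 1) (i : ℤ) :
    leftSeq p q (i + (a + b)) = rangeIndicator (rightPos (p / q : ℚ)) i :=
  rangeIndicator_add (leftPos_add_eq_rightPos hp hq hab) i

lemma dvd_of_leftSeq_periodic (hp : 0 < p) (hq : 0 < q) (hpq : IsCoprime p q) {r : ℤ}
    (hr : Periodic (leftSeq p q) r) : p + q ∣ r := by
  obtain ⟨δ, hδ⟩ := exists_mul_eq_mul_of_periodic (leftPos_strictMono (by positivity)) hp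
    (leftPos_add_self hp hq) hr
  have hcop : IsCoprime (p + q) p := by simpa [add_comm] using hpq.symm.add_mul_left_left 1
  exact hcop.dvd_of_dvd_mul_left ⟨δ, by rw [hδ]; ring⟩

lemma isPeriodicWith_leftSeq (hp : 0 < p) (hq : 0 < q) :
    IsPeriodicWith (leftSeq p q) (p + q).toNat :=
  ⟨by omega, by simpa [Int.toNat_of_nonneg (by omega : 0 ≤ p + q)] using leftSeq_periodic hp hq⟩

lemma sturmS'_eq_leftSeq (hp : 0 < p) (hq : 0 < q) (hpq : IsCoprime p q) {k : ℤ}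
    (hk : k < p + q) : sturmS' p q k = leftSeq p q k := by
  have hβ : (0 : ℚ) < p / q := by positivity
  rw [sturmS'_eq hp hq]
  refine rangeIndicator_eq_of_lt (onePos_strictMono hβ).monotone
    (leftPos_strictMono hβ).monotone (fun m hm => onePos_eq_leftPos_of_lt hp hq hpq hm)
    ?_ (leftPos_self hp hq).ge hk
  rw [onePos_self hp hq]
  omega

lemma sturmS'_eq_leftSeq_add (hp : 0 < p) (hq : 0 < q) (hab : b * q - a * p = 1) {k : ℤ}
    (hk : 2 ≤ k) : sturmS' p q k = leftSeq p q (k + (a + b)) := by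
  have hβ : (0 : ℚ) < p / q := by positivity
  rw [leftSeq_add hp hq hab, sturmS'_eq hp hq]
  exact rangeIndicator_eq_of_gt (onePos_strictMono hβ).monotone
    (rightPos_strictMono hβ).monotone (M := 0) (fun m hm => if_neg (by omega))
    (by simp [onePos]) (by simp [rightPos]) hk

lemma sturmS'_ne_leftSeq (hp : 0 < p) (hq : 0 < q) (hpq : IsCoprime p q) :
    sturmS' p q (p + q) ≠ leftSeq p q (p + q) := by
  have hβ : (0 : ℚ) < p / q := by positivity
  have hx : sturmS' p q (p + q) = 0 := by
    rw [sturmS'_eq hp hq]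
    refine rangeIndicator_eq_zero (onePos_strictMono hβ) (n := p - 1) ?_ ?_
    · rw [onePos_eq_leftPos_of_lt hp hq hpq (by omega), ← leftPos_self hp hq]
      exact leftPos_strictMono hβ (by omega)
    · rw [sub_add_cancel, onePos_self hp hq]
      omega
  have hy : leftSeq p q (p + q) = 1 := rangeIndicator_eq_one_iff.mpr ⟨p, (leftPos_self hp hq).symm⟩
  rw [hx, hy]
  decide

lemma not_isPeriodicSeq_sturmS' (hp : 0 < p) (hq : 0 < q) (hpq : IsCoprime p q) :
    ¬ IsPeriodicSeq (sturmS' p q) := by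
  rintro ⟨N, hN, hper⟩
  have := Periodic.eq_of_forall_le_s13 hper (leftSeq_periodic hp hq) (by exact_mod_cast hN)
    (by omega) (K := p + q - 1) fun k hk => sturmS'_eq_leftSeq hp hq hpq (by omega)
  exact sturmS'_ne_leftSeq hp hq hpq (congrFun this _)

lemma removeBlock_eq_leftSeq (hp : 0 < p) (hq : 0 < q) (hpq : IsCoprime p q) {i : ℤ} {n : ℕ}
    (h : IsAnomalyOcc (sturmS' p q) i n) : removeBlock (sturmS' p q) i n = leftSeq p q := by
  obtain ⟨-, N, hN, hper⟩ := h
  refine Periodic.eq_of_forall_le_s13 hper (leftSeq_periodic hp hq) (by exact_mod_cast hN) (by omega)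
    (K := min i (p + q - 1)) fun k hk => ?_
  simp only [removeBlock, if_pos (show k ≤ i by omega)]
  exact sturmS'_eq_leftSeq hp hq hpq (by omega)

lemma dvd_of_removeBlock_eq_leftSeq (hp : 0 < p) (hq : 0 < q) (hpq : IsCoprime p q)
    (hab : b * q - a * p = 1) {i : ℤ} {n : ℕ}
    (h : removeBlock (sturmS' p q) i n = leftSeq p q) : p + q ∣ n + (a + b) := by
  have hright : ∀ k ≥ max (i + 1) 2, leftSeq p q (k + (n + (a + b))) = leftSeq p q k := by
    intro k hk
    rw [← add_assoc, ← sturmS'_eq_leftSeq_add hp hq hab (by omega), ← h]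
    simp only [removeBlock, if_neg (show ¬ k ≤ i by omega)]
  refine dvd_of_leftSeq_periodic hp hq hpq (congrFun ?_)
  exact ((leftSeq_periodic hp hq).add_const _).eq_of_forall_ge_s13 (leftSeq_periodic hp hq)
    (by omega) hright

lemma removeBlock_sturmS'_zero (hp : 0 < p) (hq : 0 < q) (hpq : IsCoprime p q)
    (hab : b * q - a * p = 1) (hab' : a + b < p + q) :
    removeBlock (sturmS' p q) 0 (p + q - (a + b)).toNat = leftSeq p q := by
  funext k
  simp only [removeBlock]
  split_ifs with hk
  · exact sturmS'_eq_leftSeq hp hq hpq (by omega)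
  · rw [sturmS'_eq_leftSeq_add hp hq hab (by omega), ← leftSeq_periodic hp hq k]
    congr 1
    omega

lemma isAnomalyOcc_sturmS'_zero (hp : 0 < p) (hq : 0 < q) (hpq : IsCoprime p q)
    (hab : b * q - a * p = 1) (hab' : a + b < p + q) :
    IsAnomalyOcc (sturmS' p q) 0 (p + q - (a + b)).toNat := by
  refine ⟨by omega, (p + q).toNat, ?_⟩
  rw [removeBlock_sturmS'_zero hp hq hpq hab hab']
  exact isPeriodicWith_leftSeq hp hq

lemma evLeastPeriod_sturmS' (hp : 0 < p) (hq : 0 < q) (hpq : IsCoprime p q)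
    (hab : b * q - a * p = 1) (hab' : a + b < p + q) :
    evLeastPeriod (sturmS' p q) = (p + q).toNat := by
  refine IsLeast.csInf_eq ⟨⟨0, _, isAnomalyOcc_sturmS'_zero hp hq hpq hab hab', ?_⟩, ?_⟩
  · rw [removeBlock_sturmS'_zero hp hq hpq hab hab']
    exact isPeriodicWith_leftSeq hp hq
  · rintro N ⟨i, n, hocc, hN, hper⟩
    rw [removeBlock_eq_leftSeq hp hq hpq hocc] at hper
    have := Int.le_of_dvd (by exact_mod_cast hN) (dvd_of_leftSeq_periodic hp hq hpq hper)
    omega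

lemma anomalySize_sturmS' (hp : 0 < p) (hq : 0 < q) (hpq : IsCoprime p q)
    (hab : b * q - a * p = 1) (hab₀ : 0 ≤ a + b) (hab' : a + b < p + q) :
    anomalySize (sturmS' p q) = (p + q - (a + b)).toNat := by
  refine IsLeast.csInf_eq ⟨⟨0, isAnomalyOcc_sturmS'_zero hp hq hpq hab hab'⟩, ?_⟩
  rintro n ⟨i, hocc⟩
  have hdvd := dvd_of_removeBlock_eq_leftSeq hp hq hpq hab (removeBlock_eq_leftSeq hp hq hpq hocc)
  have := Int.le_of_dvd (by have := hocc.1; omega) hdvd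
  omega

end SkewSturmian

open SkewSturmian

/-- `S′(0,q/p)` is eventually periodic with least period `p+q` and anomaly
size `(p+q) - (a+b)`, where `(a,b)` are the restricted Bézout coefficients of `(q,p)`. -/
theorem stmt_13 (p q : ℤ) (hp : 0 < p) (hq : 0 < q) (hpq : IsCoprime p q)
    (a b : ℤ) (ha : 0 ≤ a) (ha' : a < q) (hb : 0 < b) (hb' : b ≤ p)
    (hab : b * q - a * p = 1) :
    EventuallyPeriodic (sturmS' p q) ∧ (evLeastPeriod (sturmS' p q) : ℤ) = p + q ∧
      (anomalySize (sturmS' p q) : ℤ) = (p + q) - (a + b) := by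
  have hab' : a + b < p + q := by omega
  refine ⟨⟨not_isPeriodicSeq_sturmS' hp hq hpq, 0, _, isAnomalyOcc_sturmS'_zero hp hq hpq hab hab'⟩,
    ?_, ?_⟩
  · rw [evLeastPeriod_sturmS' hp hq hpq hab hab']
    omega
  · rw [anomalySize_sturmS' hp hq hpq hab (by omega) hab']
    omega
end

section
/- Let A be a finite alphabet, let x ∈ A^ℤ be an eventually periodic sequence, and let (i,n) be an anomaly occurrence of x. Then the subshift generated by x equals the union of the orbit of x and the orbit of p(x;i,n): closure{σ^k(x) : k ∈ ℤ} = {σ^k(x) : k ∈ ℤ} ∪ {σ^k(p(x;i,n)) : k ∈ ℤ}. -/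
/-!
Write `p = p(x;i,n)`. The sequence `x` agrees with `p` on `(-∞, i]` and with `σ^{-n} p` on
`(i + n, ∞)`, so on any finite window a far shift `σ^k x` agrees with a shift of `p`. Hence a
point of the closure of the orbit of `x` lying outside that orbit is a cluster point of
`k ↦ σ^k x` along the cofinite filter, and is therefore in the closure of the orbit of `p`,
which is finite because `p` is periodic, hence closed. Conversely, if `N` is a period of `p`,
then `σ^{k - mN} x → σ^k p` as `m → ∞`.
-/

open Classical

open Filter Topology Set

theorem mapClusterPt_cofinite_of_mem_closure_range {X ι : Type*} [TopologicalSpace X] [T1Space X]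
    {f : ι → X} {y : X} (hy : y ∈ closure (range f)) (hy' : y ∉ range f) :
    MapClusterPt y cofinite f := by
  rw [mapClusterPt_iff_frequently]
  intro s hs
  rw [frequently_cofinite_iff_infinite]
  by_contra hfin
  have hF : (f '' {k | f k ∈ s}).Finite := Set.not_infinite.1 hfin |>.image f
  have hy_notin : y ∉ f '' {k | f k ∈ s} := fun h => hy' (image_subset_range _ _ h)
  obtain ⟨_, ⟨hks, hk_notin⟩, k, rfl⟩ :=
    mem_closure_iff_nhds.1 hy _ (sdiff_mem hs (hF.isClosed.compl_mem_nhds hy_notin))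
  exact hk_notin ⟨k, hks, rfl⟩

theorem mem_closure_of_mapClusterPt_of_eventually_agree {ι κ A : Type*} [TopologicalSpace A]
    [DiscreteTopology A] {f : κ → ι → A} {l : Filter κ} {Z : Set (ι → A)} {y : ι → A}
    (hf : ∀ S : Finset ι, ∀ᶠ k in l, ∃ z ∈ Z, ∀ j ∈ S, f k j = z j)
    (hy : MapClusterPt y l f) : y ∈ closure Z := by
  rw [mem_closure_iff_nhds]
  intro U hU
  rw [nhds_pi, nhds_discrete, mem_pi'] at hU
  obtain ⟨S, t, ht, hSU⟩ := hU
  have hcyl : {w : ι → A | ∀ j ∈ S, w j = y j} ∈ 𝓝 y := by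
    rw [nhds_pi, nhds_discrete, mem_pi']
    exact ⟨S, fun j => {y j}, fun j => rfl, fun w hw j hj => hw j hj⟩
  obtain ⟨k, hky, z, hzZ, hkz⟩ :=
    ((mapClusterPt_iff_frequently.1 hy _ hcyl).and_eventually (hf S)).exists
  exact ⟨z, hSU fun j hj => by rw [← hkz j hj, hky j hj]; exact ht j, hzZ⟩

section

variable {A : Type*}

theorem seqOrbit_eq_range (x : ℤ → A) : seqOrbit x = range fun k => shiftZ k x := by
  ext y
  simp [seqOrbit, eq_comm]

theorem IsPeriodicWith.seqOrbit_finite {p : ℤ → A} {N : ℕ} (hp : IsPeriodicWith p N) :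
    (seqOrbit p).Finite := by
  refine ((finite_Ico 0 (N : ℤ)).image fun k => shiftZ k p).subset ?_
  rintro _ ⟨k, rfl⟩
  have hN : (0 : ℤ) < N := by exact_mod_cast hp.1
  refine ⟨k % N, ⟨Int.emod_nonneg k hN.ne', Int.emod_lt_of_pos k hN⟩, funext fun j => ?_⟩
  have hper : Function.Periodic p (N : ℤ) := hp.2
  simpa [shiftZ, Int.emod_def, add_sub_assoc, mul_comm] using
    hper.sub_zsmul_eq (x := j + k) (k / N)

theorem IsPeriodicWith.subshiftGen_eq [TopologicalSpace A] [T1Space A] {p : ℤ → A} {N : ℕ}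
    (hp : IsPeriodicWith p N) : subshiftGen p = seqOrbit p :=
  hp.seqOrbit_finite.isClosed.closure_eq

theorem removeBlock_of_le (x : ℤ → A) {i k : ℤ} (n : ℕ) (hk : k ≤ i) :
    removeBlock x i n k = x k :=
  if_pos hk

theorem removeBlock_of_lt (x : ℤ → A) {i k : ℤ} (n : ℕ) (hk : i < k) :
    removeBlock x i n k = x (k + n) :=
  if_neg hk.not_ge

theorem eventually_agree_seqOrbit_removeBlock (x : ℤ → A) (i : ℤ) (n : ℕ) (S : Finset ℤ) :
    ∀ᶠ k in cofinite, ∃ z ∈ seqOrbit (removeBlock x i n), ∀ j ∈ S, shiftZ k x j = z j := by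
  rw [Int.cofinite_eq, eventually_sup]
  constructor
  · filter_upwards [(eventually_all_finset S).2 fun j _ => eventually_le_atBot (i - j)] with k hk
    exact ⟨_, ⟨k, rfl⟩, fun j hj => (removeBlock_of_le x n (by linarith [hk j hj])).symm⟩
  · filter_upwards [(eventually_all_finset S).2 fun j _ => eventually_ge_atTop (i + n + 1 - j)]
      with k hk
    refine ⟨_, ⟨k - n, rfl⟩, fun j hj => ?_⟩
    simp only [shiftZ]
    rw [removeBlock_of_lt x n (by linarith [hk j hj])]
    ring_nf

theorem subshiftGen_subset_union_subshiftGen_removeBlock [TopologicalSpace A] [DiscreteTopology A]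
    (x : ℤ → A) (i : ℤ) (n : ℕ) :
    subshiftGen x ⊆ seqOrbit x ∪ subshiftGen (removeBlock x i n) := by
  intro y hy
  by_cases hyx : y ∈ seqOrbit x
  · exact Or.inl hyx
  rw [seqOrbit_eq_range] at hyx
  rw [subshiftGen, seqOrbit_eq_range] at hy
  exact Or.inr <| mem_closure_of_mapClusterPt_of_eventually_agree
    (eventually_agree_seqOrbit_removeBlock x i n)
    (mapClusterPt_cofinite_of_mem_closure_range hy hyx)

theorem tendsto_shiftZ_sub_mul_period [TopologicalSpace A] {x : ℤ → A} {i : ℤ} {n N : ℕ}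
    (hp : IsPeriodicWith (removeBlock x i n) N) (k : ℤ) :
    Tendsto (fun m : ℤ => shiftZ (k - m * N) x) atTop (𝓝 (shiftZ k (removeBlock x i n))) := by
  have hN : (1 : ℤ) ≤ N := by exact_mod_cast hp.1
  have hper : Function.Periodic (removeBlock x i n) (N : ℤ) := hp.2
  refine tendsto_pi_nhds.2 fun j => tendsto_const_nhds.congr' ?_
  filter_upwards [eventually_ge_atTop (max (j + k - i) 0)] with m hm
  have hmN : m ≤ m * N := by nlinarith [le_max_right (j + k - i) 0]
  calc shiftZ k (removeBlock x i n) j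
      = removeBlock x i n (j + (k - m * N)) := by
        simpa [shiftZ, add_sub_assoc] using (hper.sub_zsmul_eq (x := j + k) m).symm
    _ = shiftZ (k - m * N) x j := removeBlock_of_le x n (by linarith [le_max_left (j + k - i) 0])

theorem seqOrbit_removeBlock_subset_subshiftGen [TopologicalSpace A] {x : ℤ → A} {i : ℤ}
    {n N : ℕ} (hp : IsPeriodicWith (removeBlock x i n) N) :
    seqOrbit (removeBlock x i n) ⊆ subshiftGen x := by
  rintro _ ⟨k, rfl⟩
  exact mem_closure_of_tendsto (tendsto_shiftZ_sub_mul_period hp k)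
    (Eventually.of_forall fun m => ⟨_, rfl⟩)

end

theorem stmt_18_general {A : Type*} [TopologicalSpace A] [DiscreteTopology A]
    (x : ℤ → A) (i : ℤ) (n : ℕ) (h : IsAnomalyOcc x i n) :
    subshiftGen x = seqOrbit x ∪ seqOrbit (removeBlock x i n) := by
  obtain ⟨-, N, hN⟩ := h
  refine ((subshiftGen_subset_union_subshiftGen_removeBlock x i n).trans ?_).antisymm
    (union_subset subset_closure (seqOrbit_removeBlock_subset_subshiftGen hN))
  rw [hN.subshiftGen_eq]

/-- For an eventually periodic sequence `x` with anomaly occurrence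
`(i,n)`, the subshift generated by `x` is the union of the orbit of `x` and the orbit of
`p(x;i,n)`. -/
theorem stmt_18 {A : Type*} [Fintype A] [TopologicalSpace A] [DiscreteTopology A]
    (x : ℤ → A) (hx : EventuallyPeriodic x) (i : ℤ) (n : ℕ) (h : IsAnomalyOcc x i n) :
    subshiftGen x = seqOrbit x ∪ seqOrbit (removeBlock x i n) :=
  stmt_18_general x i n h
end
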